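/- For every integers n ≥ 1 and k, ((-λ)^(n-1) (1)_{n,1/λ} / n^(k-1)) x^n = Σ_{l=1}^{n} (-1)^(n-l) bel_{l,λ}^{(k)}(x) S_{2,λ}(n,l), as polynomial identity in x. -/

import Mathlib

/-!
The degenerate logarithm `log_λ(1+t)` is the compositional inverse of `e_λ(t) - 1`. Both series
satisfy first-order linear differential equations, `(1 + λt) e_λ' = e_λ` and
`(1 + t) log_λ'(1 + t) = 1 + λ log_λ(1 + t)`, so by the chain rule `F = log_λ(e_λ(t))` satisfies
`(1 + λt) F' = 1 + λF` with `F(0) = 0`, whose only solution is `F = t`. Comparing coefficients of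
`log_λ(e_λ(t))^j = t^j` gives the orthogonality `Σ_m S_{1,λ}(m,j) S_{2,λ}(n,m) = δ_{nj}`.
Inserting the explicit formula for `bel_{m,λ}^{(k)}` and exchanging the two sums, the signs combine
to `(-1)^(n-1)` and only the term `j = n` survives.
-/

open PowerSeries Finset

noncomputable section

/-- Composition of formal power series (the standard composition when the inner
series `f` has zero constant term, since then `coeff n (f ^ k) = 0` for `k > n`). -/
def pcomp {R : Type*} [CommRing R] (g f : PowerSeries R) : PowerSeries R :=
  PowerSeries.mk fun n =>
    ∑ k ∈ Finset.range (n + 1), PowerSeries.coeff (R := R) k g * PowerSeries.coeff (R := R) n (f ^ k)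

/-- The formal power series `log(1+t)` over `ℚ`. -/
def Lq : PowerSeries ℚ := PowerSeries.mk fun n => if n = 0 then 0 else (-1) ^ (n + 1) / n

/-- The formal power series `-log(1-t)` over `ℚ`. -/
def Labs : PowerSeries ℚ := PowerSeries.mk fun n => if n = 0 then 0 else 1 / n

/-- Signed Stirling numbers of the first kind: `(log(1+t))^k / k! = Σ S₁(n,k) tⁿ/n!`. -/
def S1 (n k : ℕ) : ℚ := n.factorial / k.factorial * PowerSeries.coeff (R := ℚ) n (Lq ^ k)

/-- Unsigned Stirling numbers of the first kind: `(-log(1-t))^k / k! = Σ |s(n,k)| tⁿ/n!`. -/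
def uS1 (n k : ℕ) : ℚ := n.factorial / k.factorial * PowerSeries.coeff (R := ℚ) n (Labs ^ k)

/-- Stirling numbers of the second kind: `(eᵗ-1)^k / k! = Σ S₂(n,k) tⁿ/n!`. -/
def S2 (n k : ℕ) : ℚ :=
  n.factorial / k.factorial * PowerSeries.coeff (R := ℚ) n ((PowerSeries.exp ℚ - 1) ^ k)

/-- `λ^(n-1) * (1)_{n,1/λ} = ∏_{j=1}^{n-1} (λ - j)`. -/
def dc (l : ℚ) (n : ℕ) : ℚ := ∏ j ∈ Finset.Ico 1 n, (l - j)

/-- Degenerate falling factorial `(1)_{n,λ} = ∏_{j=0}^{n-1} (1 - jλ)`. -/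
def ffac (l : ℚ) (n : ℕ) : ℚ := ∏ j ∈ Finset.range n, (1 - j * l)

/-- Degenerate logarithm `log_λ(1+t) = Σ_{n≥1} λ^{n-1}(1)_{n,1/λ} tⁿ/n!`. -/
def Ld (l : ℚ) : PowerSeries ℚ :=
  PowerSeries.mk fun n => if n = 0 then 0 else dc l n / n.factorial

/-- Degenerate exponential `e_λ(t) = Σ_{n≥0} (1)_{n,λ} tⁿ/n!`. -/
def Ed (l : ℚ) : PowerSeries ℚ := PowerSeries.mk fun n => ffac l n / n.factorial

/-- Degenerate Stirling numbers of the first kind. -/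
def S1d (l : ℚ) (n k : ℕ) : ℚ :=
  n.factorial / k.factorial * PowerSeries.coeff (R := ℚ) n (Ld l ^ k)

/-- Degenerate Stirling numbers of the second kind. -/
def S2d (l : ℚ) (n k : ℕ) : ℚ :=
  n.factorial / k.factorial * PowerSeries.coeff (R := ℚ) n ((Ed l - 1) ^ k)

/-- Bell numbers of the second kind: `log(1 + log(1+t)) = Σ_{n≥1} bel_n tⁿ/n!`. -/
def belNum (n : ℕ) : ℚ := n.factorial * PowerSeries.coeff (R := ℚ) n (pcomp Lq Lq)

/-- Bell numbers of the second kind via the explicit formula. -/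
def belN (m : ℕ) : ℚ :=
  ∑ k ∈ Finset.Icc 1 m, (-1) ^ (k - 1) * (k - 1).factorial * S1 m k

/-- Bell polynomials of the second kind. -/
def belPoly (n : ℕ) : Polynomial ℚ :=
  ∑ k ∈ Finset.Icc 1 n,
    Polynomial.C ((-1) ^ (k - 1) * (k - 1).factorial * S1 n k) * Polynomial.X ^ k

/-- Bell polynomials of the second kind evaluated at `x : ℚ`. -/
def belVal (x : ℚ) (m : ℕ) : ℚ :=
  ∑ k ∈ Finset.Icc 1 m, (-1) ^ (k - 1) * (k - 1).factorial * S1 m k * x ^ k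

/-- Degenerate Bell numbers of the second kind via generating function. -/
def belNumD (l : ℚ) (n : ℕ) : ℚ := n.factorial * PowerSeries.coeff (R := ℚ) n (pcomp (Ld l) (Ld l))

/-- Degenerate Bell numbers of the second kind via the explicit formula. -/
def belND (l : ℚ) (m : ℕ) : ℚ := ∑ j ∈ Finset.Icc 1 m, dc l j * S1d l m j

/-- Degenerate Bell polynomials of the second kind. -/
def belPolyD (l : ℚ) (n : ℕ) : Polynomial ℚ :=
  ∑ k ∈ Finset.Icc 1 n, Polynomial.C (dc l k * S1d l n k) * Polynomial.X ^ k

/-- `log(1+t)` as a power series over `ℚ[x]`. -/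
def LqP : PowerSeries (Polynomial ℚ) :=
  PowerSeries.mk fun n => if n = 0 then 0 else Polynomial.C ((-1) ^ (n + 1) / n : ℚ)

/-- `-log(1-t)` as a power series over `ℚ[x]`. -/
def LabsP : PowerSeries (Polynomial ℚ) :=
  PowerSeries.mk fun n => if n = 0 then 0 else Polynomial.C (1 / n : ℚ)

/-- `log(1-t)` as a power series over `ℚ[x]`. -/
def MP : PowerSeries (Polynomial ℚ) :=
  PowerSeries.mk fun n => if n = 0 then 0 else Polynomial.C (-(1 / n) : ℚ)

/-- `log_λ(1+t)` as a power series over `ℚ[x]`. -/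
def LdP (l : ℚ) : PowerSeries (Polynomial ℚ) :=
  PowerSeries.mk fun n => if n = 0 then 0 else Polynomial.C (dc l n / n.factorial)

/-- The polylogarithm `Li_k(y) = Σ_{m≥1} yᵐ/mᵏ` as a power series over `ℚ[x]`. -/
def LiP (k : ℤ) : PowerSeries (Polynomial ℚ) :=
  PowerSeries.mk fun m => if m = 0 then 0 else Polynomial.C (((m : ℚ) ^ k)⁻¹)

/-- The degenerate polylogarithm `Li_{k,λ}` as a power series over `ℚ[x]`. -/
def LidP (l : ℚ) (k : ℤ) : PowerSeries (Polynomial ℚ) :=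
  PowerSeries.mk fun m => if m = 0 then 0 else
    Polynomial.C ((-1) ^ (m - 1) * dc l m / ((m - 1).factorial * (m : ℚ) ^ k))

/-- `-x · log(1-t)` over `ℚ[x]`. -/
def innerP : PowerSeries (Polynomial ℚ) := PowerSeries.C (R := Polynomial ℚ) Polynomial.X * LabsP

/-- `-x · log_λ(1-t)` over `ℚ[x]`. -/
def innerD (l : ℚ) : PowerSeries (Polynomial ℚ) :=
  PowerSeries.C (R := Polynomial ℚ) Polynomial.X *
    PowerSeries.mk fun n => if n = 0 then 0 else
      Polynomial.C ((-1) ^ (n + 1) * dc l n / n.factorial)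

/-- Poly-Bell polynomials of the second kind via generating function. -/
def polyBellP (k : ℤ) (n : ℕ) : Polynomial ℚ :=
  (n.factorial : ℚ) • PowerSeries.coeff (R := Polynomial ℚ) n (pcomp (LiP k) innerP)

/-- Poly-Bell polynomials of the second kind via the explicit formula. -/
def belPk (k : ℤ) (n : ℕ) : Polynomial ℚ :=
  ∑ l ∈ Finset.Icc 1 n,
    Polynomial.C ((((l : ℚ) ^ (k - 1))⁻¹) * (l - 1).factorial * uS1 n l) * Polynomial.X ^ l

/-- Degenerate poly-Bell polynomials of the second kind via generating function. -/
def belDPk (l : ℚ) (k : ℤ) (n : ℕ) : Polynomial ℚ :=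
  (n.factorial : ℚ) • PowerSeries.coeff (R := Polynomial ℚ) n (pcomp (LidP l k) (innerD l))

/-- Degenerate poly-Bell polynomials of the second kind via the explicit formula. -/
def belE (l : ℚ) (k : ℤ) (m : ℕ) : Polynomial ℚ :=
  (-1 : Polynomial ℚ) ^ (m - 1) *
    ∑ j ∈ Finset.Icc 1 m,
      Polynomial.C ((((j : ℚ) ^ (k - 1))⁻¹) * dc l j * S1d l m j) * Polynomial.X ^ j


namespace PowerSeries

variable {R : Type*} [CommRing R]

theorem coeff_pow_eq_zero_of_lt {f : R⟦X⟧} (hf : constantCoeff f = 0) {n m : ℕ} (h : n < m) :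
    coeff n (f ^ m) = 0 :=
  X_pow_dvd_iff.mp (pow_dvd_pow_of_dvd (X_dvd_iff.mpr hf) m) n h

theorem coeff_subst_eq_sum_range {f : R⟦X⟧} (hf : constantCoeff f = 0) (g : R⟦X⟧) (n : ℕ) :
    coeff n (g.subst f) = ∑ d ∈ range (n + 1), coeff d g * coeff n (f ^ d) := by
  rw [coeff_subst' (HasSubst.of_constantCoeff_zero' hf)]
  refine finsum_eq_sum_of_support_subset _ fun d hd => ?_
  by_contra hdn
  exact hd (by simp only [coeff_pow_eq_zero_of_lt hf (by simpa using hdn), smul_zero])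

theorem coeff_one_add_C_mul_X_mul_derivative (a : R) (f : R⟦X⟧) (n : ℕ) :
    coeff n ((1 + C a * X) * d⁄dX R f) = coeff (n + 1) f * (n + 1) + a * n * coeff n f := by
  rw [add_mul, one_mul, map_add, mul_assoc, coeff_C_mul, coeff_derivative]
  rcases n with _ | n
  · simp
  · rw [coeff_succ_X_mul, coeff_derivative]
    push_cast
    ring

theorem eq_zero_of_derivative_eq_mul [IsAddTorsionFree R] {G P : R⟦X⟧}
    (hG : d⁄dX R G = P * G) (h0 : constantCoeff G = 0) : G = 0 := by
  ext n
  induction n using Nat.strong_induction_on with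
  | _ n ih =>
    rcases n with _ | n
    · simpa using h0
    have hcoeff := congrArg (coeff n) hG
    rw [coeff_derivative, coeff_mul, sum_eq_zero fun p hp => ?_, mul_comm,
      ← Nat.cast_succ, ← nsmul_eq_mul, nsmul_eq_zero_iff_right n.succ_ne_zero] at hcoeff
    · rw [hcoeff, map_zero]
    · rw [ih p.2 (by have := mem_antidiagonal.mp hp; omega), map_zero, mul_zero]

end PowerSeries

section Degenerate

variable (l : ℚ)

theorem constantCoeff_Ed_sub_one : constantCoeff (Ed l - 1) = 0 := by
  rw [← coeff_zero_eq_constantCoeff_apply]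
  simp [Ed, ffac]

theorem constantCoeff_Ld : constantCoeff (Ld l) = 0 := by
  rw [← coeff_zero_eq_constantCoeff_apply]
  simp [Ld]

theorem one_add_C_mul_X_mul_derivative_Ed : (1 + C l * X) * d⁄dX ℚ (Ed l) = Ed l := by
  ext n
  rw [coeff_one_add_C_mul_X_mul_derivative]
  simp only [Ed, coeff_mk, show ffac l (n + 1) = ffac l n * (1 - n * l) from prod_range_succ _ _,
    Nat.factorial_succ]
  push_cast
  field_simp
  ring

theorem one_add_X_mul_derivative_Ld : (1 + X) * d⁄dX ℚ (Ld l) = 1 + C l * Ld l := by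
  ext n
  have h := coeff_one_add_C_mul_X_mul_derivative (1 : ℚ) (Ld l) n
  rw [map_one, one_mul] at h
  rw [h]
  rcases n with _ | n
  · simp [Ld, dc]
  · simp only [Ld, coeff_mk, if_neg (Nat.succ_ne_zero _), dc,
      prod_Ico_succ_top (by omega : 1 ≤ n + 1), Nat.factorial_succ, map_add, coeff_one, coeff_C_mul]
    push_cast
    field_simp
    ring

theorem Ld_subst_Ed_sub_one : (Ld l).subst (Ed l - 1) = X := by
  have hE := HasSubst.of_constantCoeff_zero' (constantCoeff_Ed_sub_one l)
  set F : ℚ⟦X⟧ := (Ld l).subst (Ed l - 1)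
  have hF : (1 + C l * X) * d⁄dX ℚ F = 1 + C l * F := by
    have hLd := congrArg (substAlgHom hE) (one_add_X_mul_derivative_Ld l)
    simp only [map_mul, map_add, map_one, coe_substAlgHom, subst_X hE, subst_C,
      show (MvPowerSeries.C l : ℚ⟦X⟧) = C l from rfl] at hLd
    have hdE : d⁄dX ℚ (Ed l - 1) = d⁄dX ℚ (Ed l) := by simp
    rw [derivative_subst hE, hdE]
    linear_combination (d⁄dX ℚ (Ld l)).subst (Ed l - 1) * one_add_C_mul_X_mul_derivative_Ed l + hLd
  have hunit : (1 + C l * X : ℚ⟦X⟧)⁻¹ * (1 + C l * X) = 1 :=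
    PowerSeries.inv_mul_cancel _ (by simp)
  rw [← sub_eq_zero]
  refine eq_zero_of_derivative_eq_mul (P := (1 + C l * X)⁻¹ * C l) ?_ ?_
  · rw [map_sub, derivative_X]
    linear_combination (1 + C l * X : ℚ⟦X⟧)⁻¹ * hF - (d⁄dX ℚ F - 1) * hunit
  · rw [map_sub, constantCoeff_X, sub_zero]
    exact constantCoeff_subst_eq_zero (constantCoeff_Ed_sub_one l) _ (constantCoeff_Ld l)

theorem sum_S1d_mul_S2d {j : ℕ} (hj : 1 ≤ j) (n : ℕ) :
    ∑ m ∈ Icc 1 n, S1d l m j * S2d l n m = if n = j then 1 else 0 := by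
  have hE := HasSubst.of_constantCoeff_zero' (constantCoeff_Ed_sub_one l)
  have hcomp : coeff n ((Ld l ^ j).subst (Ed l - 1)) = coeff n (X ^ j : ℚ⟦X⟧) := by
    rw [subst_pow hE, Ld_subst_Ed_sub_one]
  rw [coeff_subst_eq_sum_range (constantCoeff_Ed_sub_one l), coeff_X_pow, range_eq_Ico,
    sum_eq_sum_Ico_succ_bot (by omega : 0 < n + 1), coeff_pow_eq_zero_of_lt (constantCoeff_Ld l) hj,
    zero_mul, zero_add, zero_add, Ico_add_one_right_eq_Icc] at hcomp
  have hterm : ∀ m ∈ Icc 1 n, S1d l m j * S2d l n m =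
      n.factorial / j.factorial * (coeff m (Ld l ^ j) * coeff n ((Ed l - 1) ^ m)) := by
    intro m _
    have := m.factorial_ne_zero
    rw [S1d, S2d]
    field_simp
  rw [sum_congr rfl hterm, ← mul_sum, hcomp]
  split_ifs with hnj
  · subst hnj
    simp [n.factorial_ne_zero]
  · rw [mul_zero]

theorem S1d_eq_zero_of_lt {m j : ℕ} (h : m < j) : S1d l m j = 0 := by
  rw [S1d, coeff_pow_eq_zero_of_lt (constantCoeff_Ld l) h, mul_zero]

theorem belE_eq_sum_Icc (k : ℤ) {m n : ℕ} (hmn : m ≤ n) :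
    belE l k m = (-1) ^ (m - 1) * ∑ j ∈ Icc 1 n,
      Polynomial.C ((((j : ℚ) ^ (k - 1))⁻¹) * dc l j * S1d l m j) * Polynomial.X ^ j := by
  rw [belE]
  congr 1
  refine sum_subset (Icc_subset_Icc_right hmn) fun j hj hjm => ?_
  rw [S1d_eq_zero_of_lt l (by simp_all), mul_zero, map_zero, zero_mul]

end Degenerate

theorem stmt16 (l : ℚ) (k : ℤ) (n : ℕ) (hn : 1 ≤ n) :
    Polynomial.C ((-1 : ℚ) ^ (n - 1) * dc l n * (((n : ℚ) ^ (k - 1))⁻¹)) *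
        (Polynomial.X : Polynomial ℚ) ^ n =
      ∑ m ∈ Finset.Icc 1 n,
        (-1 : Polynomial ℚ) ^ (n - m) * belE l k m * Polynomial.C (S2d l n m) := by
  symm
  calc ∑ m ∈ Icc 1 n, (-1 : Polynomial ℚ) ^ (n - m) * belE l k m * Polynomial.C (S2d l n m)
      = ∑ m ∈ Icc 1 n, ∑ j ∈ Icc 1 n, Polynomial.C ((-1) ^ (n - 1) * dc l j *
          ((j : ℚ) ^ (k - 1))⁻¹ * (S1d l m j * S2d l n m)) * Polynomial.X ^ j := by
        refine sum_congr rfl fun m hm => ?_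
        have hsign : (-1 : ℚ) ^ (n - m) * (-1) ^ (m - 1) = (-1) ^ (n - 1) := by
          rw [← pow_add, Nat.sub_add_sub_cancel (mem_Icc.mp hm).2 (mem_Icc.mp hm).1]
        rw [belE_eq_sum_Icc l k (mem_Icc.mp hm).2, mul_sum, mul_sum, sum_mul]
        refine sum_congr rfl fun j _ => ?_
        simp only [map_mul, map_pow, map_neg, map_one, ← hsign]
        ring
    _ = ∑ j ∈ Icc 1 n, Polynomial.C ((-1) ^ (n - 1) * dc l j * ((j : ℚ) ^ (k - 1))⁻¹ *
          ∑ m ∈ Icc 1 n, S1d l m j * S2d l n m) * Polynomial.X ^ j := by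
        rw [sum_comm]
        simp only [mul_sum, map_sum, sum_mul]
    _ = _ := by
        rw [sum_eq_single_of_mem n (mem_Icc.mpr ⟨hn, le_rfl⟩) fun j hj hjn => by
          rw [sum_S1d_mul_S2d l (mem_Icc.mp hj).1, if_neg (Ne.symm hjn), mul_zero, map_zero,
            zero_mul], sum_S1d_mul_S2d l hn, if_pos rfl, mul_one]

end
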